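/- arXiv:1908.02583 — 4 statements merged into one kernel-verified Lean document; each statement's English description precedes it below -/
import Mathlib

section
/- Let K be an abstract simplicial complex, let σ be a q-simplex and τ a q'-simplex of K, let p be a non-negative integer with p ≤ min(q,q'), and set p' = q + q' − p. If σ and τ are strictly p-lower adjacent and σ and τ are not p'-upper adjacent, then for every integer h ≥ 1, σ and τ are not (p'+h)-upper adjacent. -/
attribute [local instance] Classical.propDecidable

variable {V : Type*}

/-- An abstract simplicial complex: a family of nonempty finite sets closed
under taking nonempty subsets. -/
def IsSimplicialComplex (K : Set (Finset V)) : Prop :=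
  (∀ σ ∈ K, σ.Nonempty) ∧ ∀ σ ∈ K, ∀ τ : Finset V, τ ⊆ σ → τ.Nonempty → τ ∈ K

/-- A `q`-simplex of `K` is an element of `K` of cardinality `q+1`. -/
def IsSimplex (K : Set (Finset V)) (q : ℕ) (σ : Finset V) : Prop :=
  σ ∈ K ∧ σ.card = q + 1

/-- `σ` and `τ` are `p`-lower adjacent: they share a common `p`-face in `K`. -/
def LowerAdj (K : Set (Finset V)) (p : ℕ) (σ τ : Finset V) : Prop :=
  ∃ γ, IsSimplex K p γ ∧ γ ⊆ σ ∧ γ ⊆ τ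

/-- `σ` and `τ` are `p`-upper adjacent: there is a `p`-simplex of `K`
containing both. -/
def UpperAdj (K : Set (Finset V)) (p : ℕ) (σ τ : Finset V) : Prop :=
  ∃ ρ, IsSimplex K p ρ ∧ σ ⊆ ρ ∧ τ ⊆ ρ

/-- Strict `p`-lower adjacency. -/
def StrictLowerAdj (K : Set (Finset V)) (p : ℕ) (σ τ : Finset V) : Prop :=
  LowerAdj K p σ τ ∧ ¬ LowerAdj K (p + 1) σ τ

/-- If `σ` and `τ` are strictly `p`-lower adjacent and not `p'`-upper adjacent
(for `p' = q + q' - p`), then they are not `(p'+h)`-upper adjacent for any `h ≥ 1`. -/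
theorem not_upper_adjacent_stable (K : Set (Finset V)) (hK : IsSimplicialComplex K)
    (q q' p : ℕ) (hp : p ≤ min q q') (σ τ : Finset V)
    (hσ : IsSimplex K q σ) (hτ : IsSimplex K q' τ)
    (hL : StrictLowerAdj K p σ τ)
    (hU : ¬ UpperAdj K (q + q' - p) σ τ) :
    ∀ h : ℕ, 1 ≤ h → ¬ UpperAdj K (q + q' - p + h) σ τ := by
  classical
  intro h hh ⟨ρ, hρ, hσρ, hτρ⟩
  apply hU
  obtain ⟨γ, ⟨hγK, hγc⟩, hγσ, hγτ⟩ := hL.1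
  have hγ : γ ⊆ σ ∩ τ := Finset.subset_inter hγσ hγτ
  have hint : p + 1 ≤ (σ ∩ τ).card := hγc ▸ Finset.card_le_card hγ
  have hpq : p ≤ q := le_trans hp (min_le_left _ _)
  have hpq' : p ≤ q' := le_trans hp (min_le_right _ _)
  have hcard : (σ ∪ τ).card ≤ q + q' - p + 1 := by
    have h1 := Finset.card_union_add_card_inter σ τ
    have h2 := hσ.2
    have h3 := hτ.2
    omega
  have hsub : σ ∪ τ ⊆ ρ := Finset.union_subset hσρ hτρ
  have hρc : ρ.card = q + q' - p + h + 1 := hρ.2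
  obtain ⟨u, hu1, hu2, hu3⟩ :=
    Finset.exists_subsuperset_card_eq hsub hcard (by omega)
  refine ⟨u, ⟨hK.2 ρ hρ.1 u hu2 ?_, hu3⟩,
    (Finset.subset_union_left).trans hu1, (Finset.subset_union_right).trans hu1⟩
  exact Finset.card_pos.mp (by omega)
end

section
/- Let K be an abstract simplicial complex and let q ≥ q' ≥ h ≥ 0 be integers. If σ is a q-simplex of K, τ is a q'-simplex of K, and σ and τ are (q+h)-upper adjacent, then σ and τ are (q'−h)-lower adjacent. -/
attribute [local instance] Classical.propDecidable

variable {V : Type*}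

/-- For `q ≥ q' ≥ h ≥ 0`, if a `q`-simplex `σ` and a `q'`-simplex `τ` are
`(q+h)`-upper adjacent, then they are `(q'-h)`-lower adjacent. -/
theorem upper_adj_implies_lower_adj (K : Set (Finset V))
    (hK : IsSimplicialComplex K) (q q' h : ℕ) (hq : q' ≤ q) (hh : h ≤ q')
    (σ τ : Finset V) (hσ : IsSimplex K q σ) (hτ : IsSimplex K q' τ)
    (hU : UpperAdj K (q + h) σ τ) :
    LowerAdj K (q' - h) σ τ := by
  obtain ⟨ρ, ⟨hρK, hρcard⟩, hσρ, hτρ⟩ := hU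
  have hunion : σ ∪ τ ⊆ ρ := Finset.union_subset hσρ hτρ
  have hcard : q' - h + 1 ≤ (σ ∩ τ).card := by
    have h1 : (σ ∪ τ).card ≤ q + h + 1 := hρcard ▸ Finset.card_le_card hunion
    have h2 : (σ ∪ τ).card + (σ ∩ τ).card = σ.card + τ.card :=
      Finset.card_union_add_card_inter σ τ
    have h3 := hσ.2
    have h4 := hτ.2
    omega
  obtain ⟨γ, hγsub, hγcard⟩ := Finset.exists_subset_card_eq hcard
  refine ⟨γ, ⟨?_, hγcard⟩, fun x hx => (Finset.mem_inter.mp (hγsub hx)).1,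
    fun x hx => (Finset.mem_inter.mp (hγsub hx)).2⟩
  exact hK.2 σ hσ.1 γ (fun x hx => (Finset.mem_inter.mp (hγsub hx)).1)
    (Finset.card_pos.mp (by omega))
end

section
/- Let K be a finite abstract simplicial complex, let σ be a q-simplex of K, let p ≥ q, and assume there exists at least one p-simplex of K containing σ. Then the p-upper degree of σ satisfies: #{τ ∈ K : τ ≠ σ and σ ~_{U_p} τ} = −1 + Σ_{q'=0}^{p} Σ_{τ a q'-simplex of K} min(1, #{p-simplices γ of K : σ ⊆ γ and τ ⊆ γ}). -/
attribute [local instance] Classical.propDecidable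

variable {V : Type*}

/-- Closed formula for the `p`-upper degree of a `q`-simplex `σ` in a finite
simplicial complex `K`, provided some `p`-simplex of `K` contains `σ`:
`deg_U^p(σ) = -1 + Σ_{q'=0}^{p} Σ_{τ a q'-simplex} min(1, #{p-simplices γ : σ ⊆ γ, τ ⊆ γ})`. -/
theorem upper_degree_formula (K : Finset (Finset V))
    (hK : IsSimplicialComplex (K : Set (Finset V)))
    (q p : ℕ) (hp : q ≤ p) (σ : Finset V)
    (hσ : IsSimplex (K : Set (Finset V)) q σ)
    (hex : ∃ γ ∈ K, γ.card = p + 1 ∧ σ ⊆ γ) :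
    ((K.filter (fun τ => τ ≠ σ ∧ UpperAdj (K : Set (Finset V)) p σ τ)).card : ℤ)
      = -1 + ∑ q' ∈ Finset.range (p + 1),
          ∑ τ ∈ K.filter (fun τ => τ.card = q' + 1),
            ((min 1 ((K.filter (fun γ => γ.card = p + 1 ∧ σ ⊆ γ ∧ τ ⊆ γ)).card) : ℕ) : ℤ) := by
  classical
  set S := K.filter (fun τ => UpperAdj (K : Set (Finset V)) p σ τ) with hS
  have hadj : ∀ τ : Finset V, UpperAdj (K : Set (Finset V)) p σ τ ↔
      0 < (K.filter (fun γ => γ.card = p + 1 ∧ σ ⊆ γ ∧ τ ⊆ γ)).card := by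
    intro τ
    rw [Finset.card_pos]
    constructor
    · rintro ⟨ρ, ⟨hρK, hρc⟩, hσρ, hτρ⟩
      exact ⟨ρ, Finset.mem_filter.2 ⟨hρK, hρc, hσρ, hτρ⟩⟩
    · rintro ⟨ρ, hρ⟩
      obtain ⟨hρK, hρc, hσρ, hτρ⟩ := Finset.mem_filter.1 hρ
      exact ⟨ρ, ⟨hρK, hρc⟩, hσρ, hτρ⟩
  -- rewrite each inner term as an indicator
  have hterm : ∀ τ : Finset V,
      ((min 1 ((K.filter (fun γ => γ.card = p + 1 ∧ σ ⊆ γ ∧ τ ⊆ γ)).card) : ℕ) : ℤ)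
        = if UpperAdj (K : Set (Finset V)) p σ τ then 1 else 0 := by
    intro τ
    by_cases h : UpperAdj (K : Set (Finset V)) p σ τ
    · have h1 : min 1 ((K.filter (fun γ => γ.card = p + 1 ∧ σ ⊆ γ ∧ τ ⊆ γ)).card) = 1 :=
        min_eq_left ((hadj τ).1 h)
      simp [h, h1]
    · have : (K.filter (fun γ => γ.card = p + 1 ∧ σ ⊆ γ ∧ τ ⊆ γ)).card = 0 := by
        by_contra hc
        exact h ((hadj τ).2 (Nat.pos_of_ne_zero hc))
      simp [h, this]
  -- the double sum counts S
  have hsum : ∑ q' ∈ Finset.range (p + 1),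
      ∑ τ ∈ K.filter (fun τ => τ.card = q' + 1),
        ((min 1 ((K.filter (fun γ => γ.card = p + 1 ∧ σ ⊆ γ ∧ τ ⊆ γ)).card) : ℕ) : ℤ)
      = (S.card : ℤ) := by
    have hfib : S.card = ∑ q' ∈ Finset.range (p + 1),
        (S.filter (fun τ => τ.card - 1 = q')).card := by
      have hmaps : ∀ τ ∈ S, τ.card - 1 ∈ Finset.range (p + 1) := by
        intro τ hτ
        obtain ⟨hτK, ρ, ⟨hρK, hρc⟩, hσρ, hτρ⟩ := Finset.mem_filter.1 hτ
        have h1 : 1 ≤ τ.card := Finset.card_pos.2 (hK.1 τ hτK)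
        have h2 : τ.card ≤ p + 1 := hρc ▸ Finset.card_le_card hτρ
        exact Finset.mem_range.2 (by omega)
      exact Finset.card_eq_sum_card_fiberwise hmaps
    calc ∑ q' ∈ Finset.range (p + 1),
        ∑ τ ∈ K.filter (fun τ => τ.card = q' + 1),
          ((min 1 ((K.filter (fun γ => γ.card = p + 1 ∧ σ ⊆ γ ∧ τ ⊆ γ)).card) : ℕ) : ℤ)
        = ∑ q' ∈ Finset.range (p + 1),
            ((S.filter (fun τ => τ.card - 1 = q')).card : ℤ) := by
          refine Finset.sum_congr rfl fun q' _ => ?_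
          rw [Finset.sum_congr rfl fun τ _ => hterm τ, Finset.sum_boole]
          have heq : (K.filter (fun τ => τ.card = q' + 1)).filter
              (fun τ => UpperAdj (K : Set (Finset V)) p σ τ)
              = S.filter (fun τ => τ.card - 1 = q') := by
            ext τ
            simp only [Finset.mem_filter, hS]
            constructor
            · rintro ⟨⟨hτK, hc⟩, hu⟩
              exact ⟨⟨hτK, hu⟩, by omega⟩
            · rintro ⟨⟨hτK, hu⟩, hc⟩
              have h1 : 1 ≤ τ.card := Finset.card_pos.2 (hK.1 τ hτK)
              exact ⟨⟨hτK, by omega⟩, hu⟩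
          rw [heq]
      _ = (S.card : ℤ) := by rw [hfib]; push_cast; ring
  rw [hsum]
  -- σ ∈ S
  have hσS : σ ∈ S := by
    obtain ⟨γ, hγK, hγc, hσγ⟩ := hex
    exact Finset.mem_filter.2 ⟨hσ.1, γ, ⟨hγK, hγc⟩, hσγ, hσγ⟩
  have hLHS : K.filter (fun τ => τ ≠ σ ∧ UpperAdj (K : Set (Finset V)) p σ τ) = S.erase σ := by
    ext τ
    simp only [Finset.mem_filter, Finset.mem_erase, hS]
    tauto
  rw [hLHS, Finset.card_erase_of_mem hσS]
  have : 1 ≤ S.card := Finset.card_pos.2 ⟨σ, hσS⟩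
  push_cast [this]
  ring
end

section
/- Let K be a finite abstract simplicial complex of dimension D, σ a q-simplex of K, and p a non-negative integer. Then the maximal p-adjacency degree of σ satisfies: #{τ ∈ K : τ is maximal p-adjacent to σ} = deg_A^p(σ) − Σ_{q'=p}^{D} Σ_{τ a q'-simplex of K} min(1, Σ_{q''=q'+1}^{D} Σ_{ρ a q''-simplex of K} 1_{τ ⊆ ρ} · adj^p(σ,ρ)) · adj^p(σ,τ), where 1_{τ ⊆ ρ} equals 1 if τ ⊆ ρ and 0 otherwise, and deg_A^p(σ) = #{τ ∈ K : σ ~_{A_p} τ}. -/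
attribute [local instance] Classical.propDecidable

variable {V : Type*}

/-- A `q`-simplex `σ` and a `q'`-simplex `τ` are `p`-adjacent if they are
strictly `p`-lower adjacent and not `(q+q'-p)`-upper adjacent (here
`q = σ.card - 1` and `q' = τ.card - 1`). -/
def PAdj (K : Set (Finset V)) (p : ℕ) (σ τ : Finset V) : Prop :=
  StrictLowerAdj K p σ τ ∧
    ¬ UpperAdj K ((σ.card - 1) + (τ.card - 1) - p) σ τ

/-- `τ` is maximal `p`-adjacent to `σ`: it is `p`-adjacent to `σ` and is not a
proper subset of any simplex of `K` that is `p`-adjacent to `σ`. -/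
def MaxPAdj (K : Set (Finset V)) (p : ℕ) (σ τ : Finset V) : Prop :=
  PAdj K p σ τ ∧ ∀ ρ ∈ K, PAdj K p σ ρ → ¬ τ ⊂ ρ

/-- `m_L^p(σ,τ) = min(1, #{p-simplices γ ∈ K : γ ⊆ σ and γ ⊆ τ})`. -/
noncomputable def mL (K : Finset (Finset V)) (p : ℕ) (σ τ : Finset V) : ℕ :=
  min 1 (K.filter (fun γ => γ.card = p + 1 ∧ γ ⊆ σ ∧ γ ⊆ τ)).card

/-- `m_U^r(σ,τ) = min(1, #{r-simplices ρ ∈ K : σ ⊆ ρ and τ ⊆ ρ})`. -/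
noncomputable def mU (K : Finset (Finset V)) (r : ℕ) (σ τ : Finset V) : ℕ :=
  min 1 (K.filter (fun ρ => ρ.card = r + 1 ∧ σ ⊆ ρ ∧ τ ⊆ ρ)).card

/-- `adj^p(σ,τ) = m_L^p(σ,τ)·(1 − m_L^{p+1}(σ,τ))·(1 − m_U^{q+q'−p}(σ,τ))`,
with `q = σ.card - 1` and `q' = τ.card - 1`. -/
noncomputable def adjP (K : Finset (Finset V)) (p : ℕ) (σ τ : Finset V) : ℕ :=
  mL K p σ τ * (1 - mL K (p + 1) σ τ) *
    (1 - mU K ((σ.card - 1) + (τ.card - 1) - p) σ τ)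


/-! Every factor of the formula is a `0`/`1` indicator: `adj^p(σ, τ)` is the indicator of
`σ ~_{A_p} τ`, and the factor `min(1, …)` is the indicator that `τ` is a proper face of some
simplex `p`-adjacent to `σ`. The subtracted double sum thus counts, after regrouping by
dimension, the `p`-adjacent simplices that are not maximal. -/

theorem Finset.min_one_card_filter {α : Type*} (s : Finset α) (P : α → Prop) [DecidablePred P] :
    min 1 (s.filter P).card = if ∃ x ∈ s, P x then 1 else 0 := by
  split_ifs with h
  · exact min_eq_left (Finset.card_pos.2 (by simpa [Finset.filter_nonempty_iff] using h))
  · simp [Finset.filter_eq_empty_iff.2 fun x hx hPx => h ⟨x, hx, hPx⟩]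

theorem Finset.sum_Icc_sum_filter_grade_eq {α M : Type*} [AddCommMonoid M] {s : Finset α}
    {g : α → ℕ} {D : ℕ} (hg : ∀ x ∈ s, g x ≤ D + 1) (a : ℕ) (f : ℕ → α → M) :
    ∑ n ∈ Finset.Icc a D, ∑ x ∈ s.filter (fun x => g x = n + 1), f n x
      = ∑ x ∈ s.filter (fun x => a + 1 ≤ g x), f (g x - 1) x := by
  rw [← Finset.sum_fiberwise_of_maps_to (t := Finset.Icc a D) (g := fun x => g x - 1)]
  · refine Finset.sum_congr rfl fun n hn => ?_
    rw [Finset.mem_Icc] at hn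
    rw [Finset.filter_filter]
    refine Finset.sum_congr (Finset.filter_congr fun x _ => by omega) fun x hx => ?_
    rw [(Finset.mem_filter.1 hx).2.2]
  · intro x hx
    rw [Finset.mem_filter] at hx
    have := hg x hx.1
    exact Finset.mem_Icc.2 ⟨by omega, by omega⟩

section

variable (K : Finset (Finset V)) (p : ℕ) (σ τ : Finset V)

theorem mL_eq_ite : mL K p σ τ = if LowerAdj (K : Set (Finset V)) p σ τ then 1 else 0 := by
  simp only [mL, Finset.min_one_card_filter, LowerAdj, IsSimplex, Finset.mem_coe, and_assoc]

theorem mU_eq_ite (r : ℕ) : mU K r σ τ = if UpperAdj (K : Set (Finset V)) r σ τ then 1 else 0 := by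
  simp only [mU, Finset.min_one_card_filter, UpperAdj, IsSimplex, Finset.mem_coe, and_assoc]

theorem adjP_eq_ite : adjP K p σ τ = if PAdj (K : Set (Finset V)) p σ τ then 1 else 0 := by
  rw [adjP, PAdj, StrictLowerAdj, mL_eq_ite, mL_eq_ite, mU_eq_ite]
  split_ifs <;> simp_all

end

theorem PAdj.succ_le_card {K : Set (Finset V)} {p : ℕ} {σ τ : Finset V} (h : PAdj K p σ τ) :
    p + 1 ≤ τ.card := by
  obtain ⟨⟨⟨γ, ⟨_, hγ⟩, _, hγτ⟩, _⟩, _⟩ := h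
  exact hγ ▸ Finset.card_le_card hγτ

def IsProperFaceOfPAdj (K : Set (Finset V)) (p : ℕ) (σ τ : Finset V) : Prop :=
  ∃ ρ ∈ K, PAdj K p σ ρ ∧ τ ⊂ ρ

theorem maxPAdj_iff {K : Set (Finset V)} {p : ℕ} {σ τ : Finset V} :
    MaxPAdj K p σ τ ↔ PAdj K p σ τ ∧ ¬ IsProperFaceOfPAdj K p σ τ := by
  simp only [MaxPAdj, IsProperFaceOfPAdj, not_exists, not_and]

theorem card_filter_maxPAdj (K : Finset (Finset V)) (p : ℕ) (σ : Finset V) :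
    (K.filter (fun τ => MaxPAdj (K : Set (Finset V)) p σ τ)).card
      = (K.filter (fun τ => PAdj (K : Set (Finset V)) p σ τ)).card
        - (K.filter (fun τ => PAdj (K : Set (Finset V)) p σ τ ∧
            IsProperFaceOfPAdj (K : Set (Finset V)) p σ τ)).card := by
  have hsplit := Finset.card_filter_add_card_filter_not
    (s := K.filter (fun τ => PAdj (K : Set (Finset V)) p σ τ))
    (p := IsProperFaceOfPAdj (K : Set (Finset V)) p σ)
  simp only [Finset.filter_filter, ← maxPAdj_iff] at hsplit
  omega

/-- The inner sum only runs over `ρ` with `τ.card < ρ.card`, which turns `τ ⊆ ρ` into `τ ⊂ ρ`. -/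
theorem min_one_sum_indicator_subset_mul_adjP {K : Finset (Finset V)} {D : ℕ}
    (hD : ∀ ρ ∈ K, ρ.card ≤ D + 1) (p : ℕ) (σ : Finset V) {τ : Finset V} {n : ℕ}
    (hτ : τ.card = n + 1) :
    min 1 (∑ q'' ∈ Finset.Icc (n + 1) D,
        ∑ ρ ∈ K.filter (fun ρ => ρ.card = q'' + 1),
          (if τ ⊆ ρ then 1 else 0) * adjP K p σ ρ)
      = if IsProperFaceOfPAdj (K : Set (Finset V)) p σ τ then 1 else 0 := by
  rw [Finset.sum_Icc_sum_filter_grade_eq hD]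
  simp only [adjP_eq_ite, ← ite_and, one_mul, ite_mul, zero_mul,
    Finset.sum_boole, Nat.cast_id, Finset.filter_filter, Finset.min_one_card_filter]
  refine if_congr ⟨?_, ?_⟩ rfl rfl
  · rintro ⟨ρ, hρK, hcard, hsub, hadj⟩
    exact ⟨ρ, hρK, hadj, Finset.ssubset_iff_subset_ne.2 ⟨hsub, by rintro rfl; omega⟩⟩
  · rintro ⟨ρ, hρK, hadj, hssub⟩
    have := Finset.card_lt_card hssub
    exact ⟨ρ, hρK, by omega, hssub.subset, hadj⟩

theorem sum_Icc_sum_min_one_mul_adjP {K : Finset (Finset V)} {D : ℕ}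
    (hD : ∀ ρ ∈ K, ρ.card ≤ D + 1) (p : ℕ) (σ : Finset V) :
    ∑ q' ∈ Finset.Icc p D,
        ∑ τ ∈ K.filter (fun τ => τ.card = q' + 1),
          (min 1 (∑ q'' ∈ Finset.Icc (q' + 1) D,
              ∑ ρ ∈ K.filter (fun ρ => ρ.card = q'' + 1),
                (if τ ⊆ ρ then 1 else 0) * adjP K p σ ρ))
            * adjP K p σ τ
      = (K.filter (fun τ => PAdj (K : Set (Finset V)) p σ τ ∧
          IsProperFaceOfPAdj (K : Set (Finset V)) p σ τ)).card := by
  rw [Finset.sum_Icc_sum_filter_grade_eq hD, Finset.sum_filter, Finset.card_filter]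
  refine Finset.sum_congr rfl fun τ _ => ?_
  by_cases hτ : p + 1 ≤ τ.card
  · rw [if_pos hτ, min_one_sum_indicator_subset_mul_adjP hD p σ (by omega), adjP_eq_ite]
    split_ifs <;> simp_all
  · rw [if_neg hτ, if_neg fun h => hτ h.1.succ_le_card]

theorem maximal_adjacency_degree_formula_general (K : Finset (Finset V))
    (D : ℕ) (hdim : (∀ τ ∈ K, τ.card ≤ D + 1) ∧ ∃ τ ∈ K, τ.card = D + 1)
    (p : ℕ) (σ : Finset V) :
    (K.filter (fun τ => MaxPAdj (K : Set (Finset V)) p σ τ)).card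
      = (K.filter (fun τ => PAdj (K : Set (Finset V)) p σ τ)).card
        - ∑ q' ∈ Finset.Icc p D,
            ∑ τ ∈ K.filter (fun τ => τ.card = q' + 1),
              (min 1 (∑ q'' ∈ Finset.Icc (q' + 1) D,
                  ∑ ρ ∈ K.filter (fun ρ => ρ.card = q'' + 1),
                    (if τ ⊆ ρ then 1 else 0) * adjP K p σ ρ))
                * adjP K p σ τ := by
  rw [sum_Icc_sum_min_one_mul_adjP hdim.1, card_filter_maxPAdj]

/-- Closed formula for the maximal `p`-adjacency degree of a `q`-simplex `σ`
in a finite simplicial complex `K` of dimension `D`. -/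
theorem maximal_adjacency_degree_formula (K : Finset (Finset V))
    (hK : IsSimplicialComplex (K : Set (Finset V)))
    (D : ℕ) (hdim : (∀ τ ∈ K, τ.card ≤ D + 1) ∧ ∃ τ ∈ K, τ.card = D + 1)
    (q p : ℕ) (σ : Finset V) (hσ : IsSimplex (K : Set (Finset V)) q σ) :
    (K.filter (fun τ => MaxPAdj (K : Set (Finset V)) p σ τ)).card
      = (K.filter (fun τ => PAdj (K : Set (Finset V)) p σ τ)).card
        - ∑ q' ∈ Finset.Icc p D,
            ∑ τ ∈ K.filter (fun τ => τ.card = q' + 1),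
              (min 1 (∑ q'' ∈ Finset.Icc (q' + 1) D,
                  ∑ ρ ∈ K.filter (fun ρ => ρ.card = q'' + 1),
                    (if τ ⊆ ρ then 1 else 0) * adjP K p σ ρ))
                * adjP K p σ τ :=
  maximal_adjacency_degree_formula_general K D hdim p σ
end
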